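/- Fix integers k ≥ 1 and n ≥ 0. The k-ribbon insertion algorithm π ↦ (P(π), Q(π)) is a bijection from the set of k-colored permutations of length n onto the set of pairs (P, Q) of tableaux of the same k-ribbon Fibonacci shape in which P is a standard k-ribbon Fibonacci tableau with entries 1, ..., n and Q is a k-ribbon Fibonacci path tableau with entries 1, ..., n. -/

import Mathlib

namespace KRF

/-- A letter of the alphabet `{1_1, …, 1_k, 2}`:  `one j` stands for the letter `1_j`
(with `1 ≤ j ≤ k` for genuine letters), and `two` stands for the letter `2`. -/
inductive Letter (k : ℕ) : Type where
  | one : ℕ → Letter k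
  | two : Letter k
deriving DecidableEq

/-- A word over the alphabet `{1_1, …, 1_k, 2}`, listed from the leftmost letter to the
rightmost letter. -/
abbrev Word (k : ℕ) := List (Letter k)

/-- The contribution of a letter to the rank: each `1_j` counts `1` and each `2` counts `2`. -/
def Letter.rank {k : ℕ} : Letter k → ℕ
  | .one _ => 1
  | .two => 2

/-- The rank of a word: the sum of its letters. -/
def Word.rank {k : ℕ} (w : Word k) : ℕ := (w.map Letter.rank).sum

/-- The letter `1_j` is valid when `1 ≤ j ≤ k`. -/
def Letter.Valid (k : ℕ) : Letter k → Prop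
  | .one j => 1 ≤ j ∧ j ≤ k
  | .two => True

/-- A genuine word of the Fibonacci poset `Z(k)`: all of its letters are valid. -/
def Word.Valid (k : ℕ) (w : Word k) : Prop := ∀ l ∈ w, l.Valid k

/-- The cover relation of the Fibonacci poset `Z(k)`:  `z` is covered by `w` iff `z` is
obtained from `w` either by changing a `2` into some `1_j` when all letters to the left of
that `2` are `2`'s, or by deleting the leftmost letter of the form `1_j`. -/
def ZCovers (k : ℕ) (z w : Word k) : Prop :=
  (∃ (p s : Word k) (j : ℕ), (∀ l ∈ p, l = Letter.two) ∧ 1 ≤ j ∧ j ≤ k ∧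
      w = p ++ Letter.two :: s ∧ z = p ++ Letter.one j :: s) ∨
  (∃ (p s : Word k) (j : ℕ), (∀ l ∈ p, l = Letter.two) ∧ 1 ≤ j ∧ j ≤ k ∧
      w = p ++ Letter.one j :: s ∧ z = p ++ s)

/-- `c 0 ⋖ c 1 ⋖ ⋯ ⋖ c n` is a saturated chain in `Z(k)` starting at the empty word. -/
def IsZChain (k n : ℕ) (c : ℕ → Word k) : Prop :=
  c 0 = [] ∧ ∀ i, i < n → ZCovers k (c i) (c (i + 1))

end KRF
namespace KRF

/-- A column of a (tiled and filled) `k`-ribbon Fibonacci tableau.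
`single h v` is a column of height 1 (shape letter `1_h`) tiled by one `k`-ribbon of
height `h` filled with the value `v`.
`double ht hb vt vb` is a column of height 2 (shape letter `2`) tiled by a `k`-ribbon of
height `ht` filled with `vt` stacked on top of a `k`-ribbon of height `hb` (always
`hb = k + 1 - ht` for genuine tableaux) filled with `vb`. -/
inductive Col (k : ℕ) : Type where
  | single : ℕ → ℕ → Col k
  | double : ℕ → ℕ → ℕ → ℕ → Col k
deriving DecidableEq

/-- A (tiled, filled) `k`-ribbon Fibonacci tableau: its list of columns, from the leftmost
column to the rightmost one. -/
abbrev Tab (k : ℕ) := List (Col k)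

/-- The shape letter of a column. -/
def Col.shape {k : ℕ} : Col k → Letter k
  | .single h _ => Letter.one h
  | .double _ _ _ _ => Letter.two

/-- The `k`-ribbon Fibonacci shape (a word) underlying a tableau. -/
def Tab.shape {k : ℕ} (T : Tab k) : Word k := T.map Col.shape

/-- The value in the bottom `k`-ribbon of a column. -/
def Col.bottomVal {k : ℕ} : Col k → ℕ
  | .single _ v => v
  | .double _ _ _ vb => vb

/-- The heights occurring in a column are genuine ribbon heights: between `1` and `k`,
and in a column of height 2 the two heights sum to `k + 1`. -/
def Col.HeightsValid (k : ℕ) : Col k → Prop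
  | .single h _ => 1 ≤ h ∧ h ≤ k
  | .double ht hb _ _ => 1 ≤ ht ∧ ht ≤ k ∧ hb = k + 1 - ht

/-- The list of all entries of a tableau (one for each `k`-ribbon). -/
def Tab.entries {k : ℕ} (T : Tab k) : List ℕ :=
  (T.map fun c => match c with
    | Col.single _ v => [v]
    | Col.double _ _ vt vb => [vt, vb]).flatten

/-- The list of the bottom-ribbon values of the columns of a tableau. -/
def Tab.bottoms {k : ℕ} (T : Tab k) : List ℕ := T.map Col.bottomVal

/-- `T` is a standard `k`-ribbon Fibonacci tableau with entries `1, …, n`: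
heights are valid, the entries are exactly `1, …, n`,  and the tableau can be built by
placing `n, n-1, …, 1` in order, each new `k`-ribbon being either appended (as a new
rightmost height-1 column) to the shape formed by the `k`-ribbons containing larger
entries, or stacked on top of a single such `k`-ribbon.  Equivalently (and this is how we
formalize it): the bottom entries strictly decrease from left to right (in particular the
`k`-ribbon containing the leftmost square of the bottom row contains `n`), and in each
column of height 2 the top entry is smaller than the bottom entry. -/
def IsStandardTab (k n : ℕ) (T : Tab k) : Prop :=
  (∀ c ∈ T, Col.HeightsValid k c) ∧
  (Tab.entries T).Perm (List.range' 1 n) ∧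
  List.Chain' (fun a b => b < a) (Tab.bottoms T) ∧
  (∀ c ∈ T, ∀ ht hb vt vb, c = Col.double ht hb vt vb → vt < vb)

/-- Updating a (partial) path tableau along one cover step `z ⋖ w` of `Z(k)`, placing the
value `i` in the `k` new squares of `w` relative to `z`:  if `w` is obtained from `z` by
inserting a letter `1_j` after the prefix of `2`'s, a new height-1 column with a single
ribbon of height `j` filled with `i` is created there; if `w` is obtained from `z` by
changing the letter `1_h` just after the prefix of `2`'s into a `2`, the `k` new squares
of that column form a `k`-ribbon of height `k + 1 - h` filled with `i`, stacked on top of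
the already present `k`-ribbon of height `h`. -/
def updateTab (k : ℕ) (i : ℕ) : Word k → Word k → Tab k → Tab k
  | Letter.two :: z', Letter.two :: w', c :: T => c :: updateTab k i z' w' T
  | Letter.one h :: _, Letter.two :: _, Col.single _ v :: T =>
      Col.double (k + 1 - h) h i v :: T
  | z, Letter.one j :: w', T => if z = w' then Col.single j i :: T else T
  | _, _, T => T

/-- The `k`-ribbon Fibonacci path tableau determined by a saturated chain in `Z(k)`:
for each `i = 1, …, n` the value `i` is placed in the `k` new squares of `c i` relative
to `c (i-1)`. -/
def chainTab (k : ℕ) (c : ℕ → Word k) : ℕ → Tab k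
  | 0 => []
  | m + 1 => updateTab k (m + 1) (c m) (c (m + 1)) (chainTab k c m)

/-- `T` is a `k`-ribbon Fibonacci path tableau with entries `1, …, n`: it is obtained
from some saturated chain `∅ = c 0 ⋖ c 1 ⋖ ⋯ ⋖ c n` in `Z(k)` by placing `i`'s in the
`k` new squares created at the `i`-th step. -/
def IsPathTab (k n : ℕ) (T : Tab k) : Prop :=
  ∃ c : ℕ → Word k, IsZChain k n c ∧ T = chainTab k c n

end KRF
namespace KRF

/-- A `k`-colored permutation of length `n`: a permutation `x_1 x_2 ⋯ x_n` of `{1, …, n}`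
(here `x_i = perm i + 1`, using `Fin n` positions and values) together with a color
`color i ∈ {1, …, k}` attached to each entry. -/
structure ColoredPerm (n k : ℕ) : Type where
  perm : Equiv.Perm (Fin n)
  color : Fin n → ℕ
  color_pos : ∀ i, 1 ≤ color i
  color_le : ∀ i, color i ≤ k

/-- Insertion of a value `x` of color `j` into a `k`-ribbon Fibonacci tableau: compare `x`
with the value `t` in the `k`-ribbon containing the leftmost square of the bottom row.
If the tableau is empty or `x > t`, a new leftmost height-1 column consisting of a single
`k`-ribbon of height `j` filled with `x` is created.  If `x < t`, a `k`-ribbon of height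
`j` filled with `x` is placed on top of the `k`-ribbon containing `t` (which is forced to
become a `k`-ribbon of height `k + 1 - j`); if a `k`-ribbon of height `l` filled with `b`
was already on top of the ribbon containing `t`, it is bumped out and the value `b` with
color `l` is inserted recursively into the tableau formed by the columns to the right. -/
def insertVal (k : ℕ) (x j : ℕ) : Tab k → Tab k
  | [] => [Col.single j x]
  | c :: rest =>
    if Col.bottomVal c < x then Col.single j x :: c :: rest
    else
      match c with
      | Col.single _ v => Col.double j (k + 1 - j) x v :: rest
      | Col.double ht _ vt vb => Col.double j (k + 1 - j) x vb :: insertVal k vt ht rest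

/-- The insertion tableau obtained after inserting the first `i` colored entries
`x_1^{j_1}, …, x_i^{j_i}` of the `k`-colored permutation `π` into the empty tableau. -/
def PPartial (k n : ℕ) (π : ColoredPerm n k) (i : ℕ) : Tab k :=
  ((List.finRange n).take i).foldl
    (fun T m => insertVal k ((π.perm m : ℕ) + 1) (π.color m) T) []

/-- The insertion tableau `P(π)` of a `k`-colored permutation. -/
def PTab (k n : ℕ) (π : ColoredPerm n k) : Tab k := PPartial k n π n

/-- The chain of shapes of the partial insertion tableaux of `π`. -/
def QChain (k n : ℕ) (π : ColoredPerm n k) (i : ℕ) : Word k :=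
  Tab.shape (PPartial k n π i)

/-- The recording tableau `Q(π)`: it has the same shape as `P(π)`, and after the `i`-th
insertion the value `i` is placed in the `k` squares by which the shape grew at step `i`. -/
def QTab (k n : ℕ) (π : ColoredPerm n k) : Tab k := chainTab k (QChain k n π) n

end KRF

/-!
Inserting a colored value into a tableau enlarges its shape along a single cover of `Z(k)`, and
the insertion can be undone once the smaller shape is known: a standard tableau `T` together with
a cover `z ⋖ shape T` determines the colored value `x^j` and the standard tableau `T'` of shape `z`
with `insert x^j T' = T` (bumping runs backwards along the prefix of `2`'s). The path tableau `Q`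
encodes the chain of shapes, recovered from `Q` as the shapes of its entries `≤ i`; undoing the
insertions along that chain reconstructs the colored permutation from `(P, Q)`.
-/

namespace KRF

variable {k : ℕ}

attribute [simp] Col.shape Col.bottomVal

@[simp] lemma Tab.shape_nil : Tab.shape ([] : Tab k) = [] := rfl

@[simp] lemma Tab.shape_cons (c : Col k) (T : Tab k) :
    Tab.shape (c :: T) = c.shape :: Tab.shape T := rfl

@[simp] lemma Tab.entries_nil : Tab.entries ([] : Tab k) = [] := rfl

@[simp] lemma Tab.entries_single_cons (h v : ℕ) (T : Tab k) :
    Tab.entries (Col.single h v :: T) = v :: Tab.entries T := rfl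

@[simp] lemma Tab.entries_double_cons (ht hb vt vb : ℕ) (T : Tab k) :
    Tab.entries (Col.double ht hb vt vb :: T) = vt :: vb :: Tab.entries T := rfl

@[simp] lemma Tab.bottoms_nil : Tab.bottoms ([] : Tab k) = [] := rfl

@[simp] lemma Tab.bottoms_cons (c : Col k) (T : Tab k) :
    Tab.bottoms (c :: T) = c.bottomVal :: Tab.bottoms T := rfl

def IsStandard (k : ℕ) : Tab k → Prop
  | [] => True
  | c :: T => c.HeightsValid k ∧ (∀ ht hb vt vb, c = Col.double ht hb vt vb → vt < vb) ∧
      (∀ e ∈ Tab.entries T, e < c.bottomVal) ∧ IsStandard k T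

lemma IsStandard.le_bottomVal {c : Col k} {T : Tab k} (h : IsStandard k (c :: T)) :
    ∀ e ∈ Tab.entries (c :: T), e ≤ c.bottomVal := by
  obtain ⟨-, htop, hlt, -⟩ := h
  intro e he
  cases c <;> simp only [Tab.entries_single_cons, Tab.entries_double_cons, List.mem_cons,
    Col.bottomVal] at he hlt htop ⊢ <;> grind

lemma IsStandard.forall_entries_lt_iff {T : Tab k} (hT : IsStandard k T) {y : ℕ} :
    (∀ e ∈ Tab.entries T, e < y) ↔ ∀ b ∈ (Tab.bottoms T).head?, b < y := by
  cases T with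
  | nil => simp
  | cons c T =>
    simp only [Tab.bottoms_cons, List.head?_cons, Option.mem_def, Option.some.injEq,
      forall_eq']
    constructor
    · intro h
      exact h _ (by cases c <;> simp)
    · exact fun h e he => (hT.le_bottomVal e he).trans_lt h

theorem isStandard_iff {T : Tab k} :
    IsStandard k T ↔ (∀ c ∈ T, c.HeightsValid k) ∧ List.IsChain (fun a b => b < a) (Tab.bottoms T) ∧
      (∀ c ∈ T, ∀ ht hb vt vb, c = Col.double ht hb vt vb → vt < vb) := by
  induction T with
  | nil => simp [IsStandard]
  | cons c T ih =>
    simp only [IsStandard, Tab.bottoms_cons, List.isChain_cons, List.forall_mem_cons, ih]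
    constructor
    · rintro ⟨hc, htop, hlt, hT⟩
      exact ⟨⟨hc, hT.1⟩, ⟨(ih.2 hT).forall_entries_lt_iff.1 hlt, hT.2.1⟩, htop, hT.2.2⟩
    · rintro ⟨⟨hc, hcs⟩, ⟨hlt, hchain⟩, htop, htops⟩
      exact ⟨hc, htop, (ih.2 ⟨hcs, hchain, htops⟩).forall_entries_lt_iff.2 hlt, hcs, hchain, htops⟩

theorem isStandardTab_iff {n : ℕ} {T : Tab k} :
    IsStandardTab k n T ↔ IsStandard k T ∧ (Tab.entries T).Perm (List.range' 1 n) := by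
  rw [IsStandardTab, isStandard_iff]
  exact ⟨fun ⟨h₁, h₂, h₃, h₄⟩ => ⟨⟨h₁, h₃, h₄⟩, h₂⟩, fun ⟨⟨h₁, h₃, h₄⟩, h₂⟩ => ⟨h₁, h₂, h₃, h₄⟩⟩

lemma insertVal_cons_of_lt {x : ℕ} {c : Col k} (h : c.bottomVal < x) (j : ℕ) (T : Tab k) :
    insertVal k x j (c :: T) = Col.single j x :: c :: T := by
  simp only [insertVal, if_pos h]

lemma insertVal_single_of_le {x v : ℕ} (h : x ≤ v) (j h' : ℕ) (T : Tab k) :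
    insertVal k x j (Col.single h' v :: T) = Col.double j (k + 1 - j) x v :: T :=
  if_neg h.not_gt

lemma insertVal_double_of_le {x vb : ℕ} (h : x ≤ vb) (j ht hb vt : ℕ) (T : Tab k) :
    insertVal k x j (Col.double ht hb vt vb :: T) =
      Col.double j (k + 1 - j) x vb :: insertVal k vt ht T :=
  if_neg h.not_gt

lemma entries_insertVal_perm (x j : ℕ) (T : Tab k) :
    (Tab.entries (insertVal k x j T)).Perm (x :: Tab.entries T) := by
  induction T generalizing x j with
  | nil => rfl
  | cons c T ih =>
    rcases lt_or_ge c.bottomVal x with hlt | hge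
    · rw [insertVal_cons_of_lt hlt]; rfl
    · cases c with
      | single h v =>
        change x ≤ v at hge
        rw [insertVal_single_of_le hge]; rfl
      | double ht hb vt vb =>
        change x ≤ vb at hge
        rw [insertVal_double_of_le hge]
        simpa using ((ih vt ht).cons vb).trans (.swap vt vb _)

lemma heightsValid_insertVal {x j : ℕ} (hj : 1 ≤ j) (hjk : j ≤ k) {T : Tab k}
    (hT : ∀ c ∈ T, c.HeightsValid k) : ∀ c ∈ insertVal k x j T, c.HeightsValid k := by
  induction T generalizing x j with
  | nil => simpa [insertVal, Col.HeightsValid] using ⟨hj, hjk⟩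
  | cons c T ih =>
    rcases lt_or_ge c.bottomVal x with hlt | hge
    · rw [insertVal_cons_of_lt hlt]
      simpa [Col.HeightsValid, hj, hjk] using hT
    · simp only [List.forall_mem_cons] at hT
      cases c with
      | single h v =>
        change x ≤ v at hge
        rw [insertVal_single_of_le hge]
        simpa [Col.HeightsValid, hj, hjk] using hT.2
      | double ht hb vt vb =>
        change x ≤ vb at hge
        rw [insertVal_double_of_le hge]
        obtain ⟨⟨hht, hhtk, -⟩, hT⟩ := hT
        simpa [Col.HeightsValid, hj, hjk] using ih hht hhtk hT

lemma isStandard_insertVal {x j : ℕ} (hj : 1 ≤ j) (hjk : j ≤ k) {T : Tab k}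
    (hT : IsStandard k T) (hx : (x :: Tab.entries T).Nodup) : IsStandard k (insertVal k x j T) := by
  induction T generalizing x j with
  | nil => simpa [insertVal, IsStandard, Col.HeightsValid] using ⟨hj, hjk⟩
  | cons c T ih =>
    rcases lt_or_ge c.bottomVal x with hlt | hge
    · rw [insertVal_cons_of_lt hlt]
      exact ⟨⟨hj, hjk⟩, by simp, fun e he => (hT.le_bottomVal e he).trans_lt hlt, hT⟩
    · obtain ⟨hc, htop, hbelow, hT⟩ := hT
      cases c with
      | single h v =>
        change x ≤ v at hge
        rw [insertVal_single_of_le hge]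
        have hxv : x ≠ v := by rintro rfl; simp at hx
        exact ⟨⟨hj, hjk, rfl⟩, by rintro _ _ _ _ ⟨⟩; omega, hbelow, hT⟩
      | double ht hb vt vb =>
        change x ≤ vb at hge
        rw [insertVal_double_of_le hge]
        have hxvb : x ≠ vb := by rintro rfl; simp at hx
        obtain ⟨hht, hhtk, -⟩ := hc
        refine ⟨⟨hj, hjk, rfl⟩, by rintro _ _ _ _ ⟨⟩; omega, ?_, ih hht hhtk hT ?_⟩
        · intro e he
          rcases List.mem_cons.1 ((entries_insertVal_perm vt ht T).subset he) with rfl | he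
          · exact htop _ _ _ _ rfl
          · exact hbelow e he
        · simp only [Tab.entries_double_cons, List.nodup_cons, List.mem_cons] at hx
          exact List.nodup_cons.2 ⟨by tauto, hx.2.2.2⟩

lemma ZCovers.change {j : ℕ} (hj : 1 ≤ j) (hjk : j ≤ k) (s : Word k) :
    ZCovers k (Letter.one j :: s) (Letter.two :: s) :=
  Or.inl ⟨[], s, j, by simp, hj, hjk, rfl, rfl⟩

lemma ZCovers.insert {j : ℕ} (hj : 1 ≤ j) (hjk : j ≤ k) (s : Word k) :
    ZCovers k s (Letter.one j :: s) :=
  Or.inr ⟨[], s, j, by simp, hj, hjk, rfl, rfl⟩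

lemma ZCovers.two_cons {z w : Word k} (h : ZCovers k z w) :
    ZCovers k (Letter.two :: z) (Letter.two :: w) := by
  rcases h with ⟨p, s, j, hp, hj, hjk, rfl, rfl⟩ | ⟨p, s, j, hp, hj, hjk, rfl, rfl⟩
  · exact Or.inl ⟨Letter.two :: p, s, j, by simpa using hp, hj, hjk, rfl, rfl⟩
  · exact Or.inr ⟨Letter.two :: p, s, j, by simpa using hp, hj, hjk, rfl, rfl⟩

theorem ZCovers.induction {motive : (z w : Word k) → ZCovers k z w → Prop}
    (change : ∀ j s (hj : 1 ≤ j) (hjk : j ≤ k), motive _ _ (ZCovers.change hj hjk s))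
    (insert : ∀ j s (hj : 1 ≤ j) (hjk : j ≤ k), motive _ _ (ZCovers.insert hj hjk s))
    (two_cons : ∀ z w (h : ZCovers k z w), motive z w h → motive _ _ h.two_cons)
    {z w : Word k} (h : ZCovers k z w) : motive z w h := by
  rcases h with ⟨p, s, j, hp, hj, hjk, rfl, rfl⟩ | ⟨p, s, j, hp, hj, hjk, rfl, rfl⟩ <;>
  · induction p with
    | nil => first | exact change j s hj hjk | exact insert j s hj hjk
    | cons l p ih =>
      obtain rfl : l = Letter.two := hp l (by simp)
      exact two_cons _ _ _ (ih fun l hl => hp l (by simp [hl]))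

lemma zcovers_insertVal {x j : ℕ} (hj : 1 ≤ j) (hjk : j ≤ k) {T : Tab k}
    (hT : ∀ c ∈ T, c.HeightsValid k) :
    ZCovers k (Tab.shape T) (Tab.shape (insertVal k x j T)) := by
  induction T generalizing x j with
  | nil => exact ZCovers.insert hj hjk []
  | cons c T ih =>
    rcases lt_or_ge c.bottomVal x with hlt | hge
    · rw [insertVal_cons_of_lt hlt]
      exact ZCovers.insert hj hjk _
    · simp only [List.forall_mem_cons] at hT
      cases c with
      | single h v =>
        change x ≤ v at hge
        rw [insertVal_single_of_le hge]
        exact ZCovers.change hT.1.1 hT.1.2 _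
      | double ht hb vt vb =>
        change x ≤ vb at hge
        rw [insertVal_double_of_le hge]
        exact (ih hT.1.1 hT.1.2.1 hT.2).two_cons

lemma insertVal_cons_of_le {x : ℕ} {c : Col k} (h : x ≤ c.bottomVal) (j : ℕ) (T : Tab k) :
    ∃ T', insertVal k x j (c :: T) = Col.double j (k + 1 - j) x c.bottomVal :: T' := by
  cases c with
  | single h' v => exact ⟨T, insertVal_single_of_le h j h' T⟩
  | double ht hb vt vb => exact ⟨_, insertVal_double_of_le h j ht hb vt T⟩

lemma insertVal_inj {x₁ j₁ x₂ j₂ : ℕ} {T₁ T₂ : Tab k} (hT₁ : ∀ c ∈ T₁, c.HeightsValid k)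
    (hT₂ : ∀ c ∈ T₂, c.HeightsValid k) (hsh : Tab.shape T₁ = Tab.shape T₂)
    (h : insertVal k x₁ j₁ T₁ = insertVal k x₂ j₂ T₂) : x₁ = x₂ ∧ j₁ = j₂ ∧ T₁ = T₂ := by
  induction T₁ generalizing T₂ x₁ j₁ x₂ j₂ with
  | nil =>
    obtain rfl : T₂ = [] := List.map_eq_nil_iff.1 hsh.symm
    simp only [insertVal, List.cons.injEq, Col.single.injEq] at h
    exact ⟨h.1.2, h.1.1, rfl⟩
  | cons c₁ R₁ ih =>
    obtain ⟨c₂, R₂, rfl⟩ : ∃ c₂ R₂, T₂ = c₂ :: R₂ := by cases T₂ <;> simp_all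
    simp only [Tab.shape_cons, List.cons.injEq, List.forall_mem_cons] at hsh hT₁ hT₂
    rcases lt_or_ge c₁.bottomVal x₁ with hlt₁ | hge₁ <;>
      rcases lt_or_ge c₂.bottomVal x₂ with hlt₂ | hge₂
    · rw [insertVal_cons_of_lt hlt₁, insertVal_cons_of_lt hlt₂] at h
      simp only [List.cons.injEq, Col.single.injEq] at h
      exact ⟨h.1.2, h.1.1, by rw [h.2.1, h.2.2]⟩
    · obtain ⟨T', hT'⟩ := insertVal_cons_of_le hge₂ j₂ R₂
      rw [insertVal_cons_of_lt hlt₁, hT'] at h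
      simp at h
    · obtain ⟨T', hT'⟩ := insertVal_cons_of_le hge₁ j₁ R₁
      rw [insertVal_cons_of_lt hlt₂, hT'] at h
      simp at h
    · cases c₁ <;> cases c₂ <;> simp only [Col.shape, reduceCtorEq, Letter.one.injEq,
        false_and, true_and] at hsh <;> simp only [Col.bottomVal] at hge₁ hge₂
      case single.single h₁ v₁ h₂ v₂ =>
        rw [insertVal_single_of_le hge₁, insertVal_single_of_le hge₂] at h
        simp only [List.cons.injEq, Col.double.injEq] at h
        obtain ⟨⟨rfl, -, rfl, rfl⟩, rfl⟩ := h
        exact ⟨rfl, rfl, by rw [hsh.1]⟩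
      case double.double ht₁ hb₁ vt₁ vb₁ ht₂ hb₂ vt₂ vb₂ =>
        rw [insertVal_double_of_le hge₁, insertVal_double_of_le hge₂] at h
        simp only [List.cons.injEq, Col.double.injEq] at h
        obtain ⟨⟨rfl, -, rfl, rfl⟩, hR⟩ := h
        obtain ⟨rfl, rfl, rfl⟩ := ih hT₁.2 hT₂.2 hsh hR
        obtain ⟨-, -, rfl⟩ := hT₁.1
        obtain ⟨-, -, rfl⟩ := hT₂.1
        exact ⟨rfl, rfl, rfl⟩

lemma Tab.exists_of_shape_eq_two_cons {T : Tab k} {s : Word k}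
    (h : Tab.shape T = Letter.two :: s) :
    ∃ ht hb vt vb R, T = Col.double ht hb vt vb :: R ∧ Tab.shape R = s := by
  obtain ⟨c, R, rfl, hc, hR⟩ := List.map_eq_cons_iff.1 h
  cases c with
  | single => simp at hc
  | double ht hb vt vb => exact ⟨ht, hb, vt, vb, R, rfl, hR⟩

lemma Tab.exists_of_shape_eq_one_cons {T : Tab k} {j : ℕ} {s : Word k}
    (h : Tab.shape T = Letter.one j :: s) :
    ∃ v R, T = Col.single j v :: R ∧ Tab.shape R = s := by
  obtain ⟨c, R, rfl, hc, hR⟩ := List.map_eq_cons_iff.1 h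
  cases c with
  | single h v => simp only [Col.shape, Letter.one.injEq] at hc; exact ⟨v, R, hc ▸ rfl, hR⟩
  | double => simp at hc

theorem exists_insertVal_eq {z w : Word k} (hzw : ZCovers k z w) {T : Tab k}
    (hT : IsStandard k T) (hsh : Tab.shape T = w) :
    ∃ x j T', 1 ≤ j ∧ j ≤ k ∧ IsStandard k T' ∧ Tab.shape T' = z ∧ insertVal k x j T' = T := by
  induction hzw using ZCovers.induction generalizing T with
  | change j s hj hjk =>
    obtain ⟨ht, hb, vt, vb, R, rfl, hR⟩ := Tab.exists_of_shape_eq_two_cons hsh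
    obtain ⟨⟨hht, hhtk, rfl⟩, htop, hbelow, hRstd⟩ := hT
    exact ⟨vt, ht, Col.single j vb :: R, hht, hhtk, ⟨⟨hj, hjk⟩, by simp, hbelow, hRstd⟩,
      by simp [hR], insertVal_single_of_le (htop _ _ _ _ rfl).le _ _ _⟩
  | insert j s hj hjk =>
    obtain ⟨v, R, rfl, hR⟩ := Tab.exists_of_shape_eq_one_cons hsh
    refine ⟨v, j, R, hj, hjk, hT.2.2.2, hR, ?_⟩
    cases R with
    | nil => rfl
    | cons c R => exact insertVal_cons_of_lt (hT.2.2.1 _ (by cases c <;> simp)) _ _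
  | two_cons z w _ ih =>
    obtain ⟨ht, hb, vt, vb, R, rfl, hR⟩ := Tab.exists_of_shape_eq_two_cons hsh
    obtain ⟨⟨hht, hhtk, rfl⟩, htop, hbelow, hRstd⟩ := hT
    obtain ⟨x, j, R', hj, hjk, hR', rfl, rfl⟩ := ih hRstd hR
    have hsub := (entries_insertVal_perm x j R').symm.subset
    refine ⟨vt, ht, Col.double j (k + 1 - j) x vb :: R', hht, hhtk,
      ⟨⟨hj, hjk, rfl⟩, ?_, ?_, hR'⟩, by simp, ?_⟩
    · rintro _ _ _ _ ⟨⟩; exact hbelow x (hsub List.mem_cons_self)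
    · exact fun e he => hbelow e (hsub (List.mem_cons_of_mem _ he))
    · exact insertVal_double_of_le (htop _ _ _ _ rfl).le _ _ _ _ _

/-- The shape formed by the entries `≤ i` of a path tableau, in which a top ribbon always carries
a larger entry than the ribbon below it. -/
def Tab.shapeLE (i : ℕ) (T : Tab k) : Word k :=
  T.filterMap fun
    | Col.single h v => if v ≤ i then some (Letter.one h) else none
    | Col.double _ hb vt vb =>
        if vt ≤ i then some Letter.two else if vb ≤ i then some (Letter.one hb) else none

lemma Tab.shapeLE_eq_shape {i : ℕ} {T : Tab k} (h : ∀ e ∈ Tab.entries T, e ≤ i) :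
    Tab.shapeLE i T = Tab.shape T := by
  induction T with
  | nil => rfl
  | cons c T ih =>
    cases c <;> simp_all [Tab.shapeLE]

lemma updateTab_insert (i j : ℕ) (z : Word k) (T : Tab k) :
    updateTab k i z (Letter.one j :: z) T = Col.single j i :: T := by
  cases z with
  | nil => cases T <;> simp [updateTab]
  | cons l z => cases l <;> cases T <;> simp [updateTab]

lemma updateTab_change (i h h' v : ℕ) (z w : Word k) (T : Tab k) :
    updateTab k i (Letter.one h :: z) (Letter.two :: w) (Col.single h' v :: T) =
      Col.double (k + 1 - h) h i v :: T := rfl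

lemma updateTab_two_cons (i : ℕ) (z w : Word k) (c : Col k) (T : Tab k) :
    updateTab k i (Letter.two :: z) (Letter.two :: w) (c :: T) = c :: updateTab k i z w T := rfl

theorem updateTab_spec {z w : Word k} (hzw : ZCovers k z w) {T : Tab k} (hT : Tab.shape T = z)
    (i : ℕ) :
    Tab.shape (updateTab k i z w T) = w ∧ Tab.entries (updateTab k i z w T) ⊆ i :: Tab.entries T ∧
      ∀ t < i, Tab.shapeLE t (updateTab k i z w T) = Tab.shapeLE t T := by
  induction hzw using ZCovers.induction generalizing T with
  | change j s =>
    obtain ⟨v, R, rfl, rfl⟩ := Tab.exists_of_shape_eq_one_cons hT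
    rw [updateTab_change]
    refine ⟨rfl, by simp, fun t ht => ?_⟩
    simp [Tab.shapeLE, List.filterMap_cons, ht.not_ge]
  | insert j s =>
    subst hT
    rw [updateTab_insert]
    refine ⟨rfl, by simp, fun t ht => ?_⟩
    simp [Tab.shapeLE, ht.not_ge]
  | two_cons z w _ ih =>
    obtain ⟨ht, hb, vt, vb, R, rfl, rfl⟩ := Tab.exists_of_shape_eq_two_cons hT
    obtain ⟨hsh, hsub, hle⟩ := ih rfl
    rw [updateTab_two_cons]
    refine ⟨by simp [hsh], ?_, fun t htt => ?_⟩
    · intro e he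
      have := @hsub e
      simp only [Tab.entries_double_cons, List.mem_cons] at he this ⊢
      tauto
    · simp only [Tab.shapeLE, List.filterMap_cons] at hle ⊢
      rw [hle t htt]

lemma chainTab_congr {c c' : ℕ → Word k} {m : ℕ} (h : ∀ i ≤ m, c i = c' i) :
    chainTab k c m = chainTab k c' m := by
  induction m with
  | zero => rfl
  | succ m ih =>
    simp only [chainTab, h m (by omega), h (m + 1) le_rfl, ih fun i hi => h i (by omega)]

theorem IsZChain.chainTab_spec {n : ℕ} {c : ℕ → Word k} (hc : IsZChain k n c) {m : ℕ}
    (hm : m ≤ n) :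
    Tab.shape (chainTab k c m) = c m ∧ (∀ e ∈ Tab.entries (chainTab k c m), e ≤ m) ∧
      ∀ i ≤ m, Tab.shapeLE i (chainTab k c m) = c i := by
  induction m with
  | zero => simp [chainTab, hc.1, Tab.shapeLE]
  | succ m ih =>
    obtain ⟨hsh, hle, hshLE⟩ := ih (by omega)
    obtain ⟨hsh', hsub, hshLE'⟩ := updateTab_spec (hc.2 m (by omega)) hsh (m + 1)
    have hle' : ∀ e ∈ Tab.entries (chainTab k c (m + 1)), e ≤ m + 1 := fun e he => by
      rcases List.mem_cons.1 (hsub he) with rfl | he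
      · rfl
      · exact (hle e he).trans m.le_succ
    refine ⟨hsh', hle', fun i hi => ?_⟩
    rcases hi.lt_or_eq with hi | rfl
    · exact (hshLE' i hi).trans (hshLE i (by omega))
    · exact (Tab.shapeLE_eq_shape hle').trans hsh'

lemma IsZChain.shape_chainTab {n : ℕ} {c : ℕ → Word k} (hc : IsZChain k n c) :
    Tab.shape (chainTab k c n) = c n :=
  (hc.chainTab_spec le_rfl).1

lemma IsZChain.shapeLE_chainTab {n : ℕ} {c : ℕ → Word k} (hc : IsZChain k n c) {i : ℕ}
    (hi : i ≤ n) : Tab.shapeLE i (chainTab k c n) = c i :=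
  (hc.chainTab_spec le_rfl).2.2 i hi

def insertAll (k : ℕ) (L : List (ℕ × ℕ)) : Tab k :=
  L.foldl (fun T a => insertVal k a.1 a.2 T) []

def shapeChain (k : ℕ) (L : List (ℕ × ℕ)) (i : ℕ) : Word k :=
  Tab.shape (insertAll k (L.take i))

def ValidColors (k : ℕ) (L : List (ℕ × ℕ)) : Prop :=
  ∀ a ∈ L, 1 ≤ a.2 ∧ a.2 ≤ k

lemma insertAll_append_singleton (L : List (ℕ × ℕ)) (a : ℕ × ℕ) :
    insertAll k (L ++ [a]) = insertVal k a.1 a.2 (insertAll k L) :=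
  List.foldl_append ..

lemma ValidColors.of_append {L L' : List (ℕ × ℕ)} (h : ValidColors k (L ++ L')) :
    ValidColors k L :=
  fun a ha => h a (List.mem_append_left _ ha)

lemma entries_insertAll_perm (L : List (ℕ × ℕ)) :
    (Tab.entries (insertAll k L)).Perm (L.map Prod.fst) := by
  induction L using List.reverseRecOn with
  | nil => rfl
  | append_singleton L a ih =>
    rw [insertAll_append_singleton, List.map_append, List.map_singleton]
    exact ((entries_insertVal_perm _ _ _).trans (ih.cons _)).trans
      (List.perm_append_singleton _ _).symm

lemma length_entries_insertAll (L : List (ℕ × ℕ)) :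
    (Tab.entries (insertAll k L)).length = L.length := by
  simpa using (entries_insertAll_perm (k := k) L).length_eq

lemma heightsValid_insertAll {L : List (ℕ × ℕ)} (hL : ValidColors k L) :
    ∀ c ∈ insertAll k L, c.HeightsValid k := by
  induction L using List.reverseRecOn with
  | nil => simp [insertAll]
  | append_singleton L a ih =>
    have ha := hL a (by simp)
    rw [insertAll_append_singleton]
    exact heightsValid_insertVal ha.1 ha.2 (ih hL.of_append)

lemma isStandard_insertAll {L : List (ℕ × ℕ)} (hL : ValidColors k L)
    (hnd : (L.map Prod.fst).Nodup) : IsStandard k (insertAll k L) := by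
  induction L using List.reverseRecOn with
  | nil => trivial
  | append_singleton L a ih =>
    have ha := hL a (by simp)
    rw [List.map_append, List.map_singleton, List.nodup_append_comm] at hnd
    rw [insertAll_append_singleton]
    exact isStandard_insertVal ha.1 ha.2 (ih hL.of_append (List.nodup_cons.1 hnd).2)
      (((entries_insertAll_perm L).cons a.1).nodup_iff.2 hnd)

lemma isZChain_shapeChain {L : List (ℕ × ℕ)} (hL : ValidColors k L) :
    IsZChain k L.length (shapeChain k L) := by
  refine ⟨rfl, fun i hi => ?_⟩
  have ha := hL L[i] (List.getElem_mem hi)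
  rw [shapeChain, shapeChain, List.take_add_one, List.getElem?_eq_getElem hi, Option.toList_some,
    insertAll_append_singleton]
  exact zcovers_insertVal ha.1 ha.2
    (heightsValid_insertAll fun a h => hL a (List.mem_of_mem_take h))

theorem eq_of_insertAll_eq {L₁ L₂ : List (ℕ × ℕ)} (hL₁ : ValidColors k L₁)
    (hL₂ : ValidColors k L₂) (hP : insertAll k L₁ = insertAll k L₂)
    (hQ : ∀ i ≤ L₁.length, shapeChain k L₁ i = shapeChain k L₂ i) : L₁ = L₂ := by
  have hlen : L₁.length = L₂.length := by
    rw [← length_entries_insertAll (k := k), hP, length_entries_insertAll]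
  induction L₁ using List.reverseRecOn generalizing L₂ with
  | nil => exact (List.length_eq_zero_iff.1 hlen.symm).symm
  | append_singleton L₁ a ih =>
    obtain ⟨L₂, b, rfl⟩ : ∃ L₂' b, L₂ = L₂' ++ [b] := by
      rcases List.eq_nil_or_concat L₂ with rfl | ⟨L₂', b, rfl⟩
      · simp at hlen
      · exact ⟨L₂', b, List.concat_eq_append ..⟩
    simp only [List.length_append, List.length_singleton, Nat.add_right_cancel_iff] at hlen
    have hprefix : ∀ i ≤ L₁.length, shapeChain k L₁ i = shapeChain k L₂ i := fun i hi => by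
      simpa [shapeChain, List.take_append_of_le_length hi,
        List.take_append_of_le_length (hlen ▸ hi)] using hQ i (by rw [List.length_append]; omega)
    rw [insertAll_append_singleton, insertAll_append_singleton] at hP
    obtain ⟨h₁, h₂, hP'⟩ := insertVal_inj (heightsValid_insertAll hL₁.of_append)
      (heightsValid_insertAll hL₂.of_append)
      (by simpa [shapeChain, List.take_of_length_le hlen.ge] using hprefix L₁.length le_rfl) hP
    rw [ih hL₁.of_append hL₂.of_append hP' hprefix hlen, Prod.ext h₁ h₂]

theorem exists_insertAll_eq {n : ℕ} {c : ℕ → Word k} (hc : IsZChain k n c) {P : Tab k}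
    (hP : IsStandard k P) (hsh : Tab.shape P = c n) :
    ∃ L, L.length = n ∧ ValidColors k L ∧ insertAll k L = P ∧ ∀ i ≤ n, shapeChain k L i = c i := by
  induction n generalizing P with
  | zero =>
    obtain rfl : P = [] := List.map_eq_nil_iff.1 (hsh.trans hc.1)
    exact ⟨[], rfl, by simp [ValidColors], rfl, fun i hi => by
      simp [shapeChain, insertAll, Nat.le_zero.1 hi, hc.1]⟩
  | succ n ih =>
    obtain ⟨x, j, P', hj, hjk, hP', hsh', rfl⟩ :=
      exists_insertVal_eq (hc.2 n n.lt_succ_self) hP hsh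
    obtain ⟨L, rfl, hL, rfl, hchain⟩ :=
      ih ⟨hc.1, fun i hi => hc.2 i (by omega)⟩ hP' hsh'
    refine ⟨L ++ [(x, j)], by simp, ?_, insertAll_append_singleton .., fun i hi => ?_⟩
    · intro a ha
      rcases List.mem_append.1 ha with ha | ha
      · exact hL a ha
      · obtain rfl := List.mem_singleton.1 ha
        exact ⟨hj, hjk⟩
    · rcases hi.lt_or_eq with hi | rfl
      · simpa [shapeChain, List.take_append_of_le_length (Nat.le_of_lt_succ hi)] using
          hchain i (by omega)
      · simpa [shapeChain, List.take_of_length_le, insertAll_append_singleton] using hsh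

namespace ColoredPerm

variable {n : ℕ}

def word (π : ColoredPerm n k) : List (ℕ × ℕ) :=
  (List.finRange n).map fun m => ((π.perm m : ℕ) + 1, π.color m)

@[simp] lemma length_word (π : ColoredPerm n k) : π.word.length = n := by simp [word]

lemma validColors_word (π : ColoredPerm n k) : ValidColors k π.word := by
  simp only [ValidColors, word, List.mem_map, List.mem_finRange, true_and]
  rintro _ ⟨m, rfl⟩
  exact ⟨π.color_pos m, π.color_le m⟩

lemma map_fst_word_perm (π : ColoredPerm n k) :
    (π.word.map Prod.fst).Perm (List.range' 1 n) := by
  have h : π.word.map Prod.fst =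
      ((List.finRange n).map π.perm).map fun m : Fin n => (m : ℕ) + 1 := by
    simp [word]
  have h' : List.range' 1 n = (List.finRange n).map fun m : Fin n => (m : ℕ) + 1 := by
    rw [List.range'_eq_map_range, ← List.map_coe_finRange_eq_range, List.map_map]
    exact List.map_congr_left fun _ _ => Nat.add_comm _ _
  rw [h, h']
  exact π.perm.map_finRange_perm.map _

lemma word_injective : Function.Injective (word : ColoredPerm n k → List (ℕ × ℕ)) := by
  rintro ⟨p₁, c₁, _, _⟩ ⟨p₂, c₂, _, _⟩ h
  simp only [word, List.map_inj_left, List.mem_finRange, Prod.mk.injEq, true_implies] at h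
  obtain rfl : p₁ = p₂ := Equiv.ext fun m => Fin.ext (by have := (h m).1; omega)
  obtain rfl : c₁ = c₂ := funext fun m => (h m).2
  rfl

theorem exists_word_eq {L : List (ℕ × ℕ)} (hL : ValidColors k L)
    (hperm : (L.map Prod.fst).Perm (List.range' 1 n)) : ∃ π : ColoredPerm n k, π.word = L := by
  obtain rfl : L.length = n := by simpa using hperm.length_eq
  have hbound : ∀ m : Fin L.length, 1 ≤ L[m.1].1 ∧ L[m.1].1 ≤ L.length := fun m => by
    have := hperm.subset (List.mem_map_of_mem (List.getElem_mem m.2))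
    rw [List.mem_range'_1] at this
    omega
  let f : Fin L.length → Fin L.length := fun m => ⟨L[m.1].1 - 1, by have := hbound m; omega⟩
  have hf : Function.Injective f := fun m₁ m₂ h => by
    have h₁ := hbound m₁
    have h₂ := hbound m₂
    have : (L.map Prod.fst)[m₁.1]'(by simp) = (L.map Prod.fst)[m₂.1]'(by simp) := by
      simp only [f, Fin.mk.injEq] at h
      simp only [List.getElem_map]
      omega
    exact Fin.ext ((hperm.nodup_iff.2 List.nodup_range').getElem_inj_iff.1 this)
  refine ⟨⟨Equiv.ofBijective f (Finite.injective_iff_bijective.1 hf), fun m => L[m.1].2,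
    fun m => (hL _ (List.getElem_mem _)).1, fun m => (hL _ (List.getElem_mem _)).2⟩, ?_⟩
  refine List.ext_getElem (by simp) fun i h₁ h₂ => ?_
  have := (hbound ⟨i, h₂⟩).1
  simp only [word, List.getElem_map, List.getElem_finRange, Equiv.ofBijective_apply, f]
  exact Prod.ext (Nat.sub_add_cancel this) rfl

lemma PPartial_eq (π : ColoredPerm n k) (i : ℕ) :
    PPartial k n π i = insertAll k (π.word.take i) := by
  simp [PPartial, insertAll, word, ← List.map_take, List.foldl_map]

lemma PTab_eq (π : ColoredPerm n k) : PTab k n π = insertAll k π.word := by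
  rw [PTab, PPartial_eq, List.take_of_length_le (by simp)]

lemma QChain_eq (π : ColoredPerm n k) : QChain k n π = shapeChain k π.word :=
  funext fun i => by rw [QChain, PPartial_eq]; rfl

lemma isZChain_QChain (π : ColoredPerm n k) : IsZChain k n (QChain k n π) := by
  simpa [QChain_eq] using isZChain_shapeChain π.validColors_word

lemma QChain_apply_eq_of_QTab_eq {π₁ π₂ : ColoredPerm n k} (h : QTab k n π₁ = QTab k n π₂)
    {i : ℕ} (hi : i ≤ n) : QChain k n π₁ i = QChain k n π₂ i := by
  rw [← π₁.isZChain_QChain.shapeLE_chainTab hi, ← π₂.isZChain_QChain.shapeLE_chainTab hi]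
  exact congrArg (Tab.shapeLE i) h

end ColoredPerm

theorem kRibbonInsertion_bijective_general (k n : ℕ) :
    Set.BijOn (fun π : ColoredPerm n k => (PTab k n π, QTab k n π)) Set.univ
      {PQ : Tab k × Tab k |
        IsStandardTab k n PQ.1 ∧ IsPathTab k n PQ.2 ∧ Tab.shape PQ.1 = Tab.shape PQ.2} := by
  refine ⟨fun π _ => ?_, fun π₁ _ π₂ _ h => ?_, ?_⟩
  · have hc := π.isZChain_QChain
    refine ⟨isStandardTab_iff.2 ⟨?_, ?_⟩, ⟨_, hc, rfl⟩, hc.shape_chainTab.symm⟩ <;>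
      dsimp only <;> rw [π.PTab_eq]
    · exact isStandard_insertAll π.validColors_word
        (π.map_fst_word_perm.nodup_iff.2 List.nodup_range')
    · exact (entries_insertAll_perm _).trans π.map_fst_word_perm
  · obtain ⟨hP, hQ⟩ := Prod.mk.inj h
    refine ColoredPerm.word_injective (eq_of_insertAll_eq π₁.validColors_word
      π₂.validColors_word ?_ fun i hi => ?_)
    · simpa [ColoredPerm.PTab_eq] using hP
    · rw [π₁.length_word] at hi
      simpa [ColoredPerm.QChain_eq] using ColoredPerm.QChain_apply_eq_of_QTab_eq hQ hi
  · rintro ⟨P, Q⟩ ⟨hP, ⟨c, hc, rfl⟩, hsh⟩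
    obtain ⟨hPstd, hPperm⟩ := isStandardTab_iff.1 hP
    obtain ⟨L, -, hL, rfl, hchain⟩ := exists_insertAll_eq hc hPstd (hsh.trans hc.shape_chainTab)
    obtain ⟨π, rfl⟩ := ColoredPerm.exists_word_eq hL ((entries_insertAll_perm _).symm.trans hPperm)
    refine ⟨π, trivial, ?_⟩
    simp only [π.PTab_eq, QTab, π.QChain_eq]
    exact Prod.ext rfl (chainTab_congr hchain)

/-- Fix `k ≥ 1` and `n ≥ 0`.  The `k`-ribbon insertion algorithm
`π ↦ (P(π), Q(π))` is a bijection from the set of `k`-colored permutations of length `n`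
onto the set of pairs `(P, Q)` of tableaux of the same `k`-ribbon Fibonacci shape in which
`P` is a standard `k`-ribbon Fibonacci tableau with entries `1, …, n` and `Q` is a
`k`-ribbon Fibonacci path tableau with entries `1, …, n`. -/
theorem kRibbonInsertion_bijective (k n : ℕ) (hk : 1 ≤ k) :
    Set.BijOn (fun π : ColoredPerm n k => (PTab k n π, QTab k n π)) Set.univ
      {PQ : Tab k × Tab k |
        IsStandardTab k n PQ.1 ∧ IsPathTab k n PQ.2 ∧ Tab.shape PQ.1 = Tab.shape PQ.2} :=
  kRibbonInsertion_bijective_general k n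

end KRF
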